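/- Unconditional energy stability of the semi-discrete SAV/Crank–Nicolson scheme: assume the body force satisfies f^{n+1/2}=0 and that u^n, u^{n−1} ∈ H¹₀(Ω)^d are divergence-free. If (u^{n+1}, p^{n+1/2}, q^{n+1}) with u^{n+1} ∈ H¹₀(Ω)^d solves one step of the semi-discrete SAV/Crank–Nicolson scheme, then |q^{n+1}|² − |q^n|² = −Δt·ν·‖∇u^{n+1/2}‖²_{L²(Ω)}, where u^{n+1/2}=(u^n+u^{n+1})/2. -/

import Mathlib

open MeasureTheory

noncomputable section

namespace SAVNS

variable {d : ℕ}

/-- Partial derivative `∂ᵢ g` of a scalar field on `ℝ^d`. -/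
def pd (g : (Fin d → ℝ) → ℝ) (i : Fin d) (x : Fin d → ℝ) : ℝ :=
  fderiv ℝ g x (Pi.single i 1)

/-- Divergence `∇·u` of a vector field. -/
def vdiv (u : (Fin d → ℝ) → (Fin d → ℝ)) (x : Fin d → ℝ) : ℝ :=
  ∑ i, pd (fun y => u y i) i x

/-- Laplacian `Δg` of a scalar field. -/
def lap (g : (Fin d → ℝ) → ℝ) (x : Fin d → ℝ) : ℝ :=
  ∑ i, pd (fun y => pd g i y) i x

/-- The `i`-th component of the convection term `(u·∇)v`. -/
def conv (u v : (Fin d → ℝ) → (Fin d → ℝ)) (x : Fin d → ℝ) (i : Fin d) : ℝ :=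
  ∑ j, u x j * pd (fun y => v y i) j x

/-- `|∇u|²` (pointwise). -/
def gradSq (u : (Fin d → ℝ) → (Fin d → ℝ)) (x : Fin d → ℝ) : ℝ :=
  ∑ i, ∑ j, (pd (fun y => u y i) j x) ^ 2

/-- `Σᵢⱼ ∂ⱼuᵢ ∂ⱼvᵢ` (pointwise), so that `∫_Ω` of it is `(∇u, ∇v)`. -/
def gradIP (u v : (Fin d → ℝ) → (Fin d → ℝ)) (x : Fin d → ℝ) : ℝ :=
  ∑ i, ∑ j, pd (fun y => u y i) j x * pd (fun y => v y i) j x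

/-- The `L²(Ω)` inner product of two vector fields. -/
def ipL2 (Ω : Set (Fin d → ℝ)) (u v : (Fin d → ℝ) → (Fin d → ℝ)) : ℝ :=
  ∫ x in Ω, ∑ i, u x i * v x i

/-- The total energy `E(u) = ½∫_Ω |u|²`. -/
def energy (Ω : Set (Fin d → ℝ)) (u : (Fin d → ℝ) → (Fin d → ℝ)) : ℝ :=
  (1 / 2) * ∫ x in Ω, ∑ i, (u x i) ^ 2

/-- The extrapolated velocity `ũ^{n+1/2} = (3uⁿ - u^{n-1})/2`. -/
def utilde (un um : (Fin d → ℝ) → (Fin d → ℝ)) : (Fin d → ℝ) → (Fin d → ℝ) :=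
  fun x i => (3 * un x i - um x i) / 2

/-- The Crank–Nicolson average `u^{n+1/2} = (uⁿ + u^{n+1})/2`. -/
def uhalf (un uv : (Fin d → ℝ) → (Fin d → ℝ)) : (Fin d → ℝ) → (Fin d → ℝ) :=
  fun x i => (un x i + uv x i) / 2

/-- One step of the semi-discrete SAV/Crank–Nicolson scheme for the Navier–Stokes
equations: given divergence-free `uⁿ = un`, `u^{n-1} = um` in `H¹₀(Ω)^d` and `qⁿ = qn`,
the new iterate `u^{n+1} = uv ∈ H¹₀(Ω)^d`, `p^{n+1/2} = p`, `q^{n+1} = qv`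
(with `q^{n+1/2} ≠ 0`) satisfies the momentum equation, the SAV update and `∇·u^{n+1} = 0`. -/
def SAVStep (Ω : Set (Fin d → ℝ)) (ν δ Δt : ℝ)
    (f un um uv : (Fin d → ℝ) → (Fin d → ℝ)) (p : (Fin d → ℝ) → ℝ) (qn qv : ℝ) : Prop :=
  (qn + qv) / 2 ≠ 0 ∧
  (∀ x ∈ Ω, ∀ i : Fin d,
    (uv x i - un x i) / Δt
      + ((qn + qv) / 2 / Real.sqrt (energy Ω (utilde un um) + δ)) *
          conv (utilde un um) (utilde un um) x i
      - ν * lap (fun y => uhalf un uv y i) x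
      + pd p i x = f x i) ∧
  ((qv - qn) / Δt
      = (1 / (2 * ((qn + qv) / 2))) *
          ipL2 Ω (fun y i => (uv y i - un y i) / Δt) (uhalf un uv)
        + (1 / (2 * Real.sqrt (energy Ω (utilde un um) + δ))) *
          ipL2 Ω (conv (utilde un um) (utilde un um)) (uhalf un uv)) ∧
  (∀ x ∈ Ω, vdiv uv x = 0) ∧
  ContDiff ℝ (⊤ : ℕ∞) (fun x => uv x) ∧ (∀ x ∈ frontier Ω, ∀ i, uv x i = 0)

end SAVNS


section AuxLemmas

open Set

lemma oneD (U : Set ℝ) (hU : IsOpen U) (hb : Bornology.IsBounded U)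
    (φ φ' : ℝ → ℝ) (hder : ∀ t, HasDerivAt φ (φ' t) t) (hφ' : Continuous φ')
    (hfr : ∀ t ∈ frontier U, φ t = 0) : ∫ t in U, φ' t = 0 := by
  rcases U.eq_empty_or_nonempty with rfl | hne
  · simp
  obtain ⟨r, hr⟩ := hb.subset_closedBall 0
  have hmem : ∀ t ∈ U, |t| ≤ r := fun t ht => by
    simpa [Real.closedBall_eq_Icc, abs_le] using hr ht
  have hr0 : 0 ≤ r := le_trans (abs_nonneg _) (hmem _ hne.choose_spec)
  set lo : ℝ := -(r + 1) with hlo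
  set hi : ℝ := r + 1 with hhi
  have hloU : lo ∉ U := fun h => by
    have := hmem _ h; rw [hlo, abs_neg, abs_of_nonneg (by linarith)] at this; linarith
  have hhiU : hi ∉ U := fun h => by
    have := hmem _ h; rw [hhi, abs_of_nonneg (by linarith)] at this; linarith
  have hloLt : ∀ t ∈ U, lo < t := fun t ht => by
    have := hmem _ ht; rw [abs_le] at this; simp only [hlo]; linarith
  have hhiGt : ∀ t ∈ U, t < hi := fun t ht => by
    have := hmem _ ht; rw [abs_le] at this; simp only [hhi]; linarith
  -- component endpoints
  set a : ℝ → ℝ := fun t => sSup (Iic t ∩ Uᶜ) with ha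
  set b : ℝ → ℝ := fun t => sInf (Ici t ∩ Uᶜ) with hbdef
  have hAne : ∀ t ∈ U, (Iic t ∩ Uᶜ).Nonempty := fun t ht => ⟨lo, (hloLt t ht).le, hloU⟩
  have hBne : ∀ t ∈ U, (Ici t ∩ Uᶜ).Nonempty := fun t ht => ⟨hi, (hhiGt t ht).le, hhiU⟩
  have hAbdd : ∀ t : ℝ, BddAbove (Iic t ∩ Uᶜ) := fun t => (bddAbove_Iic).mono inter_subset_left
  have hBbdd : ∀ t : ℝ, BddBelow (Ici t ∩ Uᶜ) := fun t => (bddBelow_Ici).mono inter_subset_left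
  have hAcl : ∀ t : ℝ, IsClosed (Iic t ∩ Uᶜ) := fun t => isClosed_Iic.inter hU.isClosed_compl
  have hBcl : ∀ t : ℝ, IsClosed (Ici t ∩ Uᶜ) := fun t => isClosed_Ici.inter hU.isClosed_compl
  have hamem : ∀ t ∈ U, a t ∈ Iic t ∩ Uᶜ := fun t ht => (hAcl t).csSup_mem (hAne t ht) (hAbdd t)
  have hbmem : ∀ t ∈ U, b t ∈ Ici t ∩ Uᶜ := fun t ht => (hBcl t).csInf_mem (hBne t ht) (hBbdd t)
  have halt : ∀ t ∈ U, a t < t := fun t ht =>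
    lt_of_le_of_ne (hamem t ht).1 (fun h => (hamem t ht).2 (by rw [h]; exact ht))
  have hblt : ∀ t ∈ U, t < b t := fun t ht =>
    lt_of_le_of_ne (hbmem t ht).1 (fun h => (hbmem t ht).2 (by rw [← h]; exact ht))
  have hIoo : ∀ t ∈ U, Ioo (a t) (b t) ⊆ U := by
    intro t ht s hs
    by_contra hsU
    rcases le_total s t with h | h
    · exact absurd (le_csSup (hAbdd t) ⟨h, hsU⟩) (not_le.mpr hs.1)
    · exact absurd (csInf_le (hBbdd t) ⟨h, hsU⟩) (not_le.mpr hs.2)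
  have hafr : ∀ t ∈ U, a t ∈ frontier U := by
    intro t ht
    rw [hU.frontier_eq]
    refine ⟨?_, (hamem t ht).2⟩
    have h1 : a t ∈ closure (Ioo (a t) t) := by
      rw [closure_Ioo (ne_of_lt (halt t ht))]; exact ⟨le_refl _, (halt t ht).le⟩
    exact closure_mono (fun s hs => hIoo t ht ⟨hs.1, lt_trans hs.2 (hblt t ht)⟩) h1
  have hbfr : ∀ t ∈ U, b t ∈ frontier U := by
    intro t ht
    rw [hU.frontier_eq]
    refine ⟨?_, (hbmem t ht).2⟩
    have h1 : b t ∈ closure (Ioo t (b t)) := by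
      rw [closure_Ioo (ne_of_lt (hblt t ht))]; exact ⟨(hblt t ht).le, le_refl _⟩
    exact closure_mono (fun s hs => hIoo t ht ⟨lt_trans (halt t ht) hs.1, hs.2⟩) h1
  -- invariance on the component
  have hinv : ∀ t ∈ U, ∀ s ∈ Ioo (a t) (b t), a s = a t ∧ b s = b t := by
    intro t ht s hs
    constructor
    · refine le_antisymm (csSup_le ⟨a t, hs.1.le, (hamem t ht).2⟩ ?_) (le_csSup (hAbdd s) ⟨hs.1.le, (hamem t ht).2⟩)
      intro x hx
      by_contra hgt
      exact hx.2 (hIoo t ht ⟨not_le.mp hgt, lt_of_le_of_lt hx.1 hs.2⟩)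
    · refine le_antisymm (csInf_le (hBbdd s) ⟨hs.2.le, (hbmem t ht).2⟩) (le_csInf ⟨b t, hs.2.le, (hbmem t ht).2⟩ ?_)
      intro x hx
      by_contra hgt
      exact hx.2 (hIoo t ht ⟨lt_of_lt_of_le hs.1 hx.1, not_le.mp hgt⟩)
  -- countable set of components
  set S : Set (ℝ × ℝ) := {q | ∃ t ∈ U, q = (a t, b t)} with hS
  have hScnt : S.Countable := by
    have : S ⊆ Set.range (fun q : ℚ => (a (q : ℝ), b (q : ℝ))) := by
      rintro ⟨x, y⟩ ⟨t, ht, hq⟩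
      obtain ⟨q, hq1, hq2⟩ := exists_rat_btwn (lt_trans (halt t ht) (hblt t ht))
      have hqmem : (q : ℝ) ∈ Ioo (a t) (b t) := ⟨hq1, hq2⟩
      obtain ⟨h1, h2⟩ := hinv t ht _ hqmem
      exact ⟨q, by show (a (q:ℝ), b (q:ℝ)) = (x, y); rw [h1, h2, ← hq]⟩
    exact (countable_range _).mono this
  have hUeq : U = ⋃ q : S, Ioo q.1.1 q.1.2 := by
    ext t
    constructor
    · intro ht
      exact mem_iUnion.mpr ⟨⟨(a t, b t), t, ht, rfl⟩, halt t ht, hblt t ht⟩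
    · intro ht
      obtain ⟨⟨⟨x, y⟩, ⟨t', ht', hq⟩⟩, htm⟩ := mem_iUnion.mp ht
      obtain ⟨h1, h2⟩ := Prod.mk.injEq .. ▸ hq
      exact hIoo t' ht' (by simpa [h1, h2] using htm)
  haveI : Countable S := hScnt.to_subtype
  have hint : IntegrableOn φ' U := by
    exact (hφ'.continuousOn.integrableOn_compact hb.isCompact_closure).mono_set subset_closure
  have hdisj : Pairwise (Function.onFun Disjoint (fun q : S => Ioo q.1.1 q.1.2)) := by
    rintro ⟨⟨x, y⟩, t, ht, hq⟩ ⟨⟨x', y'⟩, t', ht', hq'⟩ hne'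
    simp only [Function.onFun]
    refine Set.disjoint_left.mpr fun s hs hs' => hne' ?_
    obtain ⟨h1, h2⟩ := Prod.mk.injEq .. ▸ hq
    obtain ⟨h1', h2'⟩ := Prod.mk.injEq .. ▸ hq'
    subst h1 h2 h1' h2'
    obtain ⟨e1, e2⟩ := hinv t ht s hs
    obtain ⟨e1', e2'⟩ := hinv t' ht' s hs'
    exact Subtype.ext (by rw [Prod.mk.injEq]; exact ⟨e1 ▸ e1'.symm ▸ rfl, e2 ▸ e2'.symm ▸ rfl⟩)
  rw [hUeq, integral_iUnion (fun q => measurableSet_Ioo) hdisj (hUeq ▸ hint)]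
  have hzero : ∀ q : S, ∫ t in Ioo q.1.1 q.1.2, φ' t = 0 := by
    rintro ⟨⟨x, y⟩, t, ht, hq⟩
    obtain ⟨h1, h2⟩ := Prod.mk.injEq .. ▸ hq
    subst h1 h2
    have hxy : a t ≤ b t := (lt_trans (halt t ht) (hblt t ht)).le
    have : ∫ s in Ioo (a t) (b t), φ' s = ∫ s in (a t)..(b t), φ' s := by
      rw [intervalIntegral.integral_of_le hxy, integral_Ioc_eq_integral_Ioo]
    rw [this, intervalIntegral.integral_eq_sub_of_hasDerivAt (fun s _ => hder s)
      (hφ'.intervalIntegrable _ _), hfr _ (hbfr t ht), hfr _ (hafr t ht), sub_zero]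
  simp [hzero]


namespace SAVNS
open MeasureTheory Set

lemma insertNth_line {n : ℕ} (i : Fin (n+1)) (z : Fin n → ℝ) (t : ℝ) :
    (i.insertNth t z : Fin (n+1) → ℝ) = Fin.insertNth (α := fun _ => ℝ) i 0 z + t • (Pi.single i 1 : Fin (n+1) → ℝ) := by
  ext j
  rcases eq_or_ne j i with rfl | hj
  · simp
  · obtain ⟨k, rfl⟩ := Fin.exists_succAbove_eq hj
    simp [Pi.single_eq_of_ne (i.succAbove_ne k)]

lemma integral_pd_zero {n : ℕ} (Ω : Set (Fin (n+1) → ℝ)) (hΩo : IsOpen Ω)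
    (hΩb : Bornology.IsBounded Ω) (g : (Fin (n+1) → ℝ) → ℝ) (hg : ContDiff ℝ (⊤ : ℕ∞) g)
    (hfr : ∀ x ∈ frontier Ω, g x = 0) (i : Fin (n+1)) :
    ∫ x in Ω, pd g i x = 0 := by
  have hΩm : MeasurableSet Ω := hΩo.measurableSet
  have hpdc : Continuous (pd g i) := (hg.continuous_fderiv (by simp)).clm_apply continuous_const
  have hio : IntegrableOn (pd g i) Ω :=
    (hpdc.continuousOn.integrableOn_compact hΩb.isCompact_closure).mono_set subset_closure
  have hint : Integrable (Ω.indicator (pd g i)) := hio.integrable_indicator hΩm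
  set e := MeasurableEquiv.piFinSuccAbove (fun _ : Fin (n+1) => ℝ) i with he
  have mp := (volume_preserving_piFinSuccAbove (fun _ : Fin (n+1) => ℝ) i).symm
  have hcomp := mp.integral_comp e.symm.measurableEmbedding (Ω.indicator (pd g i))
  have hintc : Integrable (fun y => Ω.indicator (pd g i) (e.symm y)) :=
    (mp.integrable_comp_emb e.symm.measurableEmbedding).mpr hint
  rw [← integral_indicator hΩm, ← hcomp]
  have hsymm : ∀ p : ℝ × (Fin n → ℝ), e.symm p = i.insertNth p.1 p.2 := by
    intro p; rfl
  rw [Measure.volume_eq_prod] at hintc ⊢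
  rw [integral_prod_symm _ hintc]
  have key : ∀ z : Fin n → ℝ, ∫ t : ℝ, Ω.indicator (pd g i) (e.symm (t, z)) = 0 := by
    intro z
    set L : ℝ → (Fin (n+1) → ℝ) := fun t => i.insertNth t z with hL
    have hLline : ∀ t, L t = Fin.insertNth (α := fun _ => ℝ) i 0 z + t • (Pi.single i 1 : Fin (n+1) → ℝ) := fun t => insertNth_line i z t
    have hLcont : Continuous L := by
      have : Continuous fun t : ℝ => Fin.insertNth (α := fun _ => ℝ) i 0 z + t • (Pi.single i 1 : Fin (n+1) → ℝ) :=
        continuous_const.add (continuous_id.smul continuous_const)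
      simpa [funext hLline] using this
    set U : Set ℝ := {t | L t ∈ Ω} with hU
    have hUo : IsOpen U := hΩo.preimage hLcont
    have hUb : Bornology.IsBounded U := by
      obtain ⟨r, hr⟩ := hΩb.subset_closedBall 0
      refine (Metric.isBounded_closedBall (x := (0:ℝ)) (r := r)).subset ?_
      intro t ht
      have h1 : L t ∈ Metric.closedBall 0 r := hr ht
      rw [mem_closedBall_zero_iff] at h1 ⊢
      calc ‖t‖ = ‖L t i‖ := by simp [hL]
      _ ≤ ‖L t‖ := norm_le_pi_norm (L t) i
      _ ≤ r := h1
    have hder : ∀ t, HasDerivAt (fun s => g (L s)) (pd g i (L t)) t := by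
      intro t
      have h1 : HasDerivAt L (Pi.single i 1) t := by
        have : HasDerivAt (fun s : ℝ => i.insertNth 0 z + s • (Pi.single i 1 : Fin (n+1) → ℝ))
            ((1:ℝ) • (Pi.single i 1 : Fin (n+1) → ℝ)) t := ((hasDerivAt_id t).smul_const _).const_add _
        simpa [funext hLline] using this
      have h2 : HasFDerivAt g (fderiv ℝ g (L t)) (L t) :=
        (hg.differentiable (by simp) (L t)).hasFDerivAt
      exact h2.comp_hasDerivAt t h1
    have hcont' : Continuous fun t => pd g i (L t) := hpdc.comp hLcont
    have hfrU : ∀ t ∈ frontier U, g (L t) = 0 := by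
      intro t ht
      rw [hUo.frontier_eq] at ht
      refine hfr _ ?_
      rw [hΩo.frontier_eq]
      refine ⟨?_, ht.2⟩
      have : L t ∈ closure (L '' U) :=
        (image_closure_subset_closure_image hLcont) (mem_image_of_mem L ht.1)
      exact closure_mono (by rintro _ ⟨s, hs, rfl⟩; exact hs) this
    have h1d := oneD U hUo hUb (fun t => g (L t)) (fun t => pd g i (L t)) hder hcont' hfrU
    calc ∫ t : ℝ, Ω.indicator (pd g i) (e.symm (t, z))
        = ∫ t : ℝ, U.indicator (fun s => pd g i (L s)) t := by
          have hpt : ∀ t : ℝ, Ω.indicator (pd g i) (e.symm (t, z)) = U.indicator (fun s => pd g i (L s)) t := by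
            intro t
            rw [hsymm]
            by_cases h : L t ∈ Ω
            · rw [Set.indicator_of_mem (show (i.insertNth t z : Fin (n+1) → ℝ) ∈ Ω from h),
                Set.indicator_of_mem (show t ∈ U from h)]
            · rw [Set.indicator_of_notMem (show (i.insertNth t z : Fin (n+1) → ℝ) ∉ Ω from h),
                Set.indicator_of_notMem (show t ∉ U from h)]
          simp only [hpt]

      _ = ∫ t in U, pd g i (L t) := integral_indicator hUo.measurableSet
      _ = 0 := h1d
  simp only [key, integral_zero]

end SAVNS

namespace SAVNS
open MeasureTheory Set

variable {d : ℕ}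

lemma contDiff_pd {g : (Fin d → ℝ) → ℝ} (hg : ContDiff ℝ (⊤ : ℕ∞) g) (i : Fin d) :
    ContDiff ℝ (⊤ : ℕ∞) (pd g i) :=
  (hg.fderiv_right (by simp)).clm_apply contDiff_const

lemma continuous_pd {g : (Fin d → ℝ) → ℝ} (hg : ContDiff ℝ (⊤ : ℕ∞) g) (i : Fin d) :
    Continuous (pd g i) := (contDiff_pd hg i).continuous

lemma pd_mul {f h : (Fin d → ℝ) → ℝ} (hf : Differentiable ℝ f) (hh : Differentiable ℝ h)
    (i : Fin d) (x : Fin d → ℝ) :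
    pd (fun y => f y * h y) i x = pd f i x * h x + f x * pd h i x := by
  unfold pd
  rw [fderiv_fun_mul (hf x) (hh x)]
  simp only [ContinuousLinearMap.add_apply, ContinuousLinearMap.smul_apply, smul_eq_mul]
  ring

lemma pd_add_div_two {f h : (Fin d → ℝ) → ℝ} (hf : Differentiable ℝ f)
    (hh : Differentiable ℝ h) (i : Fin d) (x : Fin d → ℝ) :
    pd (fun y => (f y + h y) / 2) i x = (pd f i x + pd h i x) / 2 := by
  unfold pd
  have h1 : HasFDerivAt (fun y => (f y + h y) / 2)
      ((2:ℝ)⁻¹ • (fderiv ℝ f x + fderiv ℝ h x)) x := by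
    have := (((hf x).hasFDerivAt.add (hh x).hasFDerivAt).const_smul (2:ℝ)⁻¹)
    refine this.congr_of_eventuallyEq (Filter.Eventually.of_forall fun y => ?_)
    show (f y + h y) / 2 = (2:ℝ)⁻¹ * (f y + h y); ring
  rw [h1.fderiv]
  simp only [ContinuousLinearMap.smul_apply, ContinuousLinearMap.add_apply, smul_eq_mul]
  ring

lemma contIntOn {f : (Fin d → ℝ) → ℝ} (hf : Continuous f) {Ω : Set (Fin d → ℝ)}
    (hb : Bornology.IsBounded Ω) : MeasureTheory.IntegrableOn f Ω :=
  (hf.continuousOn.integrableOn_compact hb.isCompact_closure).mono_set subset_closure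

end SAVNS

namespace SAVNS

open MeasureTheory Set

lemma ibp_lap {n : ℕ} (Ω : Set (Fin (n+1) → ℝ)) (hΩo : IsOpen Ω)
    (hΩb : Bornology.IsBounded Ω) (w : (Fin (n+1) → ℝ) → (Fin (n+1) → ℝ))
    (hw : ContDiff ℝ (⊤ : ℕ∞) w) (hbc : ∀ x ∈ frontier Ω, ∀ i, w x i = 0) :
    ∫ x in Ω, (∑ i, lap (fun y => w y i) x * w x i) = - ∫ x in Ω, gradSq w x := by
  have hwc : ∀ i, ContDiff ℝ (⊤ : ℕ∞) (fun y => w y i) := contDiff_pi.1 hw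
  have key : ∀ i j, ∫ x in Ω, pd (fun y => w y i * pd (fun y' => w y' i) j y) j x = 0 := by
    intro i j
    exact integral_pd_zero Ω hΩo hΩb _ ((hwc i).mul (contDiff_pd (hwc i) j))
      (fun x hx => by rw [hbc x hx i, zero_mul]) j
  have hcontin : ∀ i j, Continuous (pd (fun y => w y i * pd (fun y' => w y' i) j y) j) :=
    fun i j => continuous_pd ((hwc i).mul (contDiff_pd (hwc i) j)) j
  have hgradc : Continuous (gradSq w) := by
    refine continuous_finset_sum _ fun i _ => continuous_finset_sum _ fun j _ => ?_
    exact (continuous_pd (hwc i) j).pow 2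
  have hbig : ∫ x in Ω, (∑ i, ∑ j, pd (fun y => w y i * pd (fun y' => w y' i) j y) j x) = 0 := by
    rw [integral_finset_sum _ (fun i _ => integrable_finset_sum _
      (fun j _ => contIntOn (hcontin i j) hΩb))]
    refine Finset.sum_eq_zero fun i _ => ?_
    rw [integral_finset_sum _ (fun j _ => contIntOn (hcontin i j) hΩb)]
    exact Finset.sum_eq_zero fun j _ => key i j
  have hpt : ∀ x, (∑ i, lap (fun y => w y i) x * w x i)
      = (∑ i, ∑ j, pd (fun y => w y i * pd (fun y' => w y' i) j y) j x) - gradSq w x := by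
    intro x
    unfold lap gradSq
    rw [← Finset.sum_sub_distrib]
    refine Finset.sum_congr rfl fun i _ => ?_
    rw [Finset.sum_mul, ← Finset.sum_sub_distrib]
    refine Finset.sum_congr rfl fun j _ => ?_
    rw [pd_mul ((hwc i).differentiable (by simp)) ((contDiff_pd (hwc i) j).differentiable (by simp))]
    ring
  calc ∫ x in Ω, (∑ i, lap (fun y => w y i) x * w x i)
      = ∫ x in Ω, ((∑ i, ∑ j, pd (fun y => w y i * pd (fun y' => w y' i) j y) j x)
          - gradSq w x) := by
        exact setIntegral_congr_fun hΩo.measurableSet fun x _ => hpt x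
    _ = (∫ x in Ω, (∑ i, ∑ j, pd (fun y => w y i * pd (fun y' => w y' i) j y) j x))
          - ∫ x in Ω, gradSq w x := by
        exact integral_sub (integrable_finset_sum _ (fun i _ => integrable_finset_sum _
          (fun j _ => contIntOn (hcontin i j) hΩb))) (contIntOn hgradc hΩb)
    _ = - ∫ x in Ω, gradSq w x := by rw [hbig]; ring

lemma ibp_pressure {n : ℕ} (Ω : Set (Fin (n+1) → ℝ)) (hΩo : IsOpen Ω)
    (hΩb : Bornology.IsBounded Ω) (p : (Fin (n+1) → ℝ) → ℝ)
    (w : (Fin (n+1) → ℝ) → (Fin (n+1) → ℝ))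
    (hp : ContDiff ℝ (⊤ : ℕ∞) p) (hw : ContDiff ℝ (⊤ : ℕ∞) w)
    (hbc : ∀ x ∈ frontier Ω, ∀ i, w x i = 0)
    (hdivw : ∀ x ∈ Ω, vdiv w x = 0) :
    ∫ x in Ω, (∑ i, pd p i x * w x i) = 0 := by
  have hwc : ∀ i, ContDiff ℝ (⊤ : ℕ∞) (fun y => w y i) := contDiff_pi.1 hw
  have key : ∀ i, ∫ x in Ω, pd (fun y => p y * w y i) i x = 0 := by
    intro i
    exact integral_pd_zero Ω hΩo hΩb _ (hp.mul (hwc i))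
      (fun x hx => by rw [hbc x hx i, mul_zero]) i
  have hcontin : ∀ i, Continuous (pd (fun y => p y * w y i) i) :=
    fun i => continuous_pd (hp.mul (hwc i)) i
  have hbig : ∫ x in Ω, (∑ i, pd (fun y => p y * w y i) i x) = 0 := by
    rw [integral_finset_sum _ (fun i _ => contIntOn (hcontin i) hΩb)]
    exact Finset.sum_eq_zero fun i _ => key i
  rw [← hbig]
  refine setIntegral_congr_fun hΩo.measurableSet fun x hx => ?_
  have hpt : ∀ i, pd (fun y => p y * w y i) i x
      = pd p i x * w x i + p x * pd (fun y => w y i) i x := fun i =>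
    pd_mul (hp.differentiable (by simp)) ((hwc i).differentiable (by simp)) i x
  calc (∑ i, pd p i x * w x i)
      = (∑ i, pd p i x * w x i) + p x * vdiv w x := by rw [hdivw x hx]; ring
    _ = ∑ i, pd (fun y => p y * w y i) i x := by
        unfold vdiv
        rw [Finset.mul_sum, ← Finset.sum_add_distrib]
        exact (Finset.sum_congr rfl fun i _ => (hpt i).symm)

end SAVNS

end AuxLemmas

/-- **Unconditional energy stability of the semi-discrete SAV/Crank–Nicolson scheme**
(Theorem 2.1): if `f^{n+1/2} = 0`, `uⁿ, u^{n-1} ∈ H¹₀(Ω)^d` are divergence-free and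
`(u^{n+1}, p^{n+1/2}, q^{n+1})`, with `u^{n+1} ∈ H¹₀(Ω)^d`, solves one step of the
semi-discrete SAV/Crank–Nicolson scheme, then
`|q^{n+1}|² - |qⁿ|² = -Δt ν ‖∇u^{n+1/2}‖²_{L²(Ω)}` with `u^{n+1/2} = (uⁿ + u^{n+1})/2`. -/
theorem SAVNS.semi_discrete_energy_stability
    (d : ℕ) (hd : d = 2 ∨ d = 3)
    (Ω : Set (Fin d → ℝ)) (hΩo : IsOpen Ω) (hΩb : Bornology.IsBounded Ω)
    (ν δ Δt : ℝ) (hν : 0 < ν) (hδ : 0 < δ) (hΔt : 0 < Δt)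
    (un um uv : (Fin d → ℝ) → (Fin d → ℝ)) (p : (Fin d → ℝ) → ℝ) (qn qv : ℝ)
    -- smoothness ("all functions are smooth enough")
    (hsm_un : ContDiff ℝ (⊤ : ℕ∞) un) (hsm_um : ContDiff ℝ (⊤ : ℕ∞) um)
    (hsm_uv : ContDiff ℝ (⊤ : ℕ∞) uv) (hsm_p : ContDiff ℝ (⊤ : ℕ∞) p)
    -- `uⁿ, u^{n-1} ∈ H¹₀(Ω)^d` are divergence-free
    (hbc_un : ∀ x ∈ frontier Ω, ∀ i, un x i = 0)
    (hbc_um : ∀ x ∈ frontier Ω, ∀ i, um x i = 0)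
    (hdiv_un : ∀ x ∈ Ω, SAVNS.vdiv un x = 0)
    (hdiv_um : ∀ x ∈ Ω, SAVNS.vdiv um x = 0)
    -- one step of the scheme with `f^{n+1/2} = 0`
    (hstep : SAVNS.SAVStep Ω ν δ Δt (fun _ _ => 0) un um uv p qn qv) :
    |qv| ^ 2 - |qn| ^ 2 = -(Δt * ν * ∫ x in Ω, SAVNS.gradSq (SAVNS.uhalf un uv) x) := by
  obtain ⟨m, rfl⟩ : ∃ m, d = m + 1 := by rcases hd with rfl | rfl; exacts [⟨1, rfl⟩, ⟨2, rfl⟩]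
  unfold SAVNS.SAVStep at hstep
  obtain ⟨hq, hmom, hsav, hdivuv, _, hbcuv⟩ := hstep
  set T := SAVNS.utilde un um with hT
  set w := SAVNS.uhalf un uv with hw
  have cun : ∀ i, ContDiff ℝ (⊤ : ℕ∞) (fun y => un y i) := fun i => contDiff_pi.1 hsm_un i
  have cum : ∀ i, ContDiff ℝ (⊤ : ℕ∞) (fun y => um y i) := fun i => contDiff_pi.1 hsm_um i
  have cuv : ∀ i, ContDiff ℝ (⊤ : ℕ∞) (fun y => uv y i) := fun i => contDiff_pi.1 hsm_uv i
  have hsmT : ContDiff ℝ (⊤ : ℕ∞) T :=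
    contDiff_pi.2 fun i => ((contDiff_const.mul (cun i)).sub (cum i)).div_const 2
  have hsmw : ContDiff ℝ (⊤ : ℕ∞) w := contDiff_pi.2 fun i => ((cun i).add (cuv i)).div_const 2
  have hwc : ∀ i, ContDiff ℝ (⊤ : ℕ∞) (fun y => w y i) := contDiff_pi.1 hsmw
  have hTc : ∀ i, ContDiff ℝ (⊤ : ℕ∞) (fun y => T y i) := contDiff_pi.1 hsmT
  have hbcw : ∀ x ∈ frontier Ω, ∀ i, w x i = 0 := by
    intro x hx i
    show (un x i + uv x i) / 2 = 0
    rw [hbc_un x hx i, hbcuv x hx i]; norm_num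
  have hdivw : ∀ x ∈ Ω, SAVNS.vdiv w x = 0 := by
    intro x hx
    have hpdw : ∀ i, SAVNS.pd (fun y => w y i) i x
        = (SAVNS.pd (fun y => un y i) i x + SAVNS.pd (fun y => uv y i) i x) / 2 := fun i =>
      SAVNS.pd_add_div_two ((cun i).differentiable (by simp)) ((cuv i).differentiable (by simp)) i x
    have h1 := hdiv_un x hx
    have h2 := hdivuv x hx
    unfold SAVNS.vdiv at h1 h2 ⊢
    rw [Finset.sum_congr rfl fun i _ => hpdw i, ← Finset.sum_div, Finset.sum_add_distrib,
      h1, h2]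
    norm_num
  have hE : 0 ≤ SAVNS.energy Ω T := by
    unfold SAVNS.energy
    have h0 : 0 ≤ ∫ x in Ω, ∑ i, (T x i) ^ 2 :=
      setIntegral_nonneg hΩo.measurableSet fun x _ => Finset.sum_nonneg fun i _ => sq_nonneg _
    linarith
  set s := Real.sqrt (SAVNS.energy Ω T + δ) with hsdef
  have hspos : 0 < s := Real.sqrt_pos.2 (by linarith)
  have hsne : s ≠ 0 := ne_of_gt hspos
  -- continuity / integrability of the four integrands
  have hAc : Continuous fun x => ∑ i, (uv x i - un x i) / Δt * w x i :=
    continuous_finset_sum _ fun i _ =>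
      (((cuv i).continuous.sub (cun i).continuous).div_const Δt).mul (hwc i).continuous
  have hBc : Continuous fun x => ∑ i, SAVNS.conv T T x i * w x i :=
    continuous_finset_sum _ fun i _ =>
      (continuous_finset_sum _ fun j _ =>
        (hTc j).continuous.mul (SAVNS.continuous_pd (hTc i) j)).mul (hwc i).continuous
  have hCc : Continuous fun x => ∑ i, SAVNS.lap (fun y => w y i) x * w x i :=
    continuous_finset_sum _ fun i _ =>
      (continuous_finset_sum _ fun j _ =>
        SAVNS.continuous_pd (SAVNS.contDiff_pd (hwc i) j) j).mul (hwc i).continuous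
  have hDc : Continuous fun x => ∑ i, SAVNS.pd p i x * w x i :=
    continuous_finset_sum _ fun i _ => (SAVNS.continuous_pd hsm_p i).mul (hwc i).continuous
  have iA := SAVNS.contIntOn hAc hΩb
  have iB := SAVNS.contIntOn hBc hΩb
  have iC := SAVNS.contIntOn hCc hΩb
  have iD := SAVNS.contIntOn hDc hΩb
  -- momentum equation tested with w
  have hmom0 : ∀ x ∈ Ω, (∑ i, ((uv x i - un x i) / Δt
      + (qn + qv) / 2 / s * SAVNS.conv T T x i
      - ν * SAVNS.lap (fun y => w y i) x + SAVNS.pd p i x) * w x i) = 0 := by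
    intro x hx
    refine Finset.sum_eq_zero fun i _ => ?_
    rw [hmom x hx i]
    simp
  have hsplit : ∀ x : Fin (m + 1) → ℝ, (∑ i, ((uv x i - un x i) / Δt
      + (qn + qv) / 2 / s * SAVNS.conv T T x i
      - ν * SAVNS.lap (fun y => w y i) x + SAVNS.pd p i x) * w x i)
      = (∑ i, (uv x i - un x i) / Δt * w x i)
        + (qn + qv) / 2 / s * (∑ i, SAVNS.conv T T x i * w x i)
        - ν * (∑ i, SAVNS.lap (fun y => w y i) x * w x i)
        + (∑ i, SAVNS.pd p i x * w x i) := by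
    intro x
    rw [Finset.mul_sum, Finset.mul_sum, ← Finset.sum_add_distrib, ← Finset.sum_sub_distrib,
      ← Finset.sum_add_distrib]
    exact Finset.sum_congr rfl fun i _ => by ring
  have hmomint : (∫ x in Ω, ∑ i, (uv x i - un x i) / Δt * w x i)
      + (qn + qv) / 2 / s * (∫ x in Ω, ∑ i, SAVNS.conv T T x i * w x i)
      - ν * (∫ x in Ω, ∑ i, SAVNS.lap (fun y => w y i) x * w x i)
      + (∫ x in Ω, ∑ i, SAVNS.pd p i x * w x i) = 0 := by
    have h0 : ∫ x in Ω, (∑ i, ((uv x i - un x i) / Δt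
        + (qn + qv) / 2 / s * SAVNS.conv T T x i
        - ν * SAVNS.lap (fun y => w y i) x + SAVNS.pd p i x) * w x i) = 0 := by
      rw [setIntegral_congr_fun hΩo.measurableSet hmom0]
      simp
    rw [← h0]
    have h1 : ∫ x in Ω, (∑ i, ((uv x i - un x i) / Δt
        + (qn + qv) / 2 / s * SAVNS.conv T T x i
        - ν * SAVNS.lap (fun y => w y i) x + SAVNS.pd p i x) * w x i)
        = ∫ x in Ω, ((∑ i, (uv x i - un x i) / Δt * w x i)
          + (qn + qv) / 2 / s * (∑ i, SAVNS.conv T T x i * w x i)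
          - ν * (∑ i, SAVNS.lap (fun y => w y i) x * w x i)
          + (∑ i, SAVNS.pd p i x * w x i)) := by
      exact setIntegral_congr_fun hΩo.measurableSet fun x _ => hsplit x
    have iB2 : IntegrableOn (fun x => (qn + qv) / 2 / s * ∑ i, SAVNS.conv T T x i * w x i)
        Ω volume := by exact iB.const_mul _
    have iC2 : IntegrableOn (fun x => ν * ∑ i, SAVNS.lap (fun y => w y i) x * w x i)
        Ω volume := by exact iC.const_mul _
    have iA2 : IntegrableOn (fun x => (∑ i, (uv x i - un x i) / Δt * w x i)
        + (qn + qv) / 2 / s * ∑ i, SAVNS.conv T T x i * w x i) Ω volume := by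
      exact iA.add iB2
    have iA3 : IntegrableOn (fun x => (∑ i, (uv x i - un x i) / Δt * w x i)
        + (qn + qv) / 2 / s * (∑ i, SAVNS.conv T T x i * w x i)
        - ν * ∑ i, SAVNS.lap (fun y => w y i) x * w x i) Ω volume := by
      exact iA2.sub iC2
    rw [h1, integral_add iA3 iD, integral_sub iA2 iC2,
      integral_add iA iB2, integral_const_mul, integral_const_mul]
  -- integration by parts
  have hC : (∫ x in Ω, ∑ i, SAVNS.lap (fun y => w y i) x * w x i)
      = - ∫ x in Ω, SAVNS.gradSq w x := SAVNS.ibp_lap Ω hΩo hΩb w hsmw hbcw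
  have hD : (∫ x in Ω, ∑ i, SAVNS.pd p i x * w x i) = 0 :=
    SAVNS.ibp_pressure Ω hΩo hΩb p w hsm_p hsmw hbcw hdivw
  rw [hC, hD] at hmomint
  -- the SAV relation
  have eA : SAVNS.ipL2 Ω (fun y i => (uv y i - un y i) / Δt) w
      = ∫ x in Ω, ∑ i, (uv x i - un x i) / Δt * w x i := rfl
  have eB : SAVNS.ipL2 Ω (SAVNS.conv T T) w
      = ∫ x in Ω, ∑ i, SAVNS.conv T T x i * w x i := rfl
  rw [eA, eB] at hsav
  set A := ∫ x in Ω, ∑ i, (uv x i - un x i) / Δt * w x i with hAdef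
  set B := ∫ x in Ω, ∑ i, SAVNS.conv T T x i * w x i with hBdef
  set G := ∫ x in Ω, SAVNS.gradSq w x with hGdef
  have hqne : qn + qv ≠ 0 := fun h => hq (by rw [h]; norm_num)
  have hkey : A + (qn + qv) / 2 / s * B = -(ν * G) := by linarith
  have h3 : qv ^ 2 - qn ^ 2 = Δt * (A + (qn + qv) / 2 / s * B) := by
    have h2 : qv ^ 2 - qn ^ 2 = Δt * ((qv - qn) / Δt) * (qn + qv) := by
      field_simp
      ring
    rw [h2, hsav]
    field_simp
  rw [sq_abs, sq_abs, h3, hkey]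
  ring
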